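/- arXiv:2601.05928 — 2 statements merged into one kernel-verified Lean document; each statement's English description precedes it below -/
import Mathlib

section
/- On the geometric grid p_j = exp(−h(M−j)) (0 ≤ j ≤ M) with grading parameter h > 0 and M ≥ 3, the matrix F_h is tridiagonal with zero diagonal, and its superdiagonal entries f_j := (F_h)_{j,j+1} = −(F_h)_{j+1,j} are given explicitly by: f_0 = √(1 + e^{−h})/(4 sinh(h/2)); f_j = 1/(4 sinh(h/2)) for 1 ≤ j ≤ M−2; and f_{M−1} = √(1 + e^{h})/(4 sinh(h/2)). -/
open Matrix

noncomputable def sbpWeight (M : ℕ) (p : ℕ → ℝ) (j : ℕ) : ℝ :=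
  if j = 0 then (p 1 - p 0) / 2
  else if j = M then (p M - p (M - 1)) / 2
  else (p (j + 1) - p (j - 1)) / 2

noncomputable def sbpW (M : ℕ) (p : ℕ → ℝ) : Matrix (Fin (M + 1)) (Fin (M + 1)) ℝ :=
  Matrix.diagonal fun j => sbpWeight M p (j : ℕ)

noncomputable def sbpQ (M : ℕ) : Matrix (Fin (M + 1)) (Fin (M + 1)) ℝ :=
  Matrix.of fun i j =>
    if (i : ℕ) + 1 = (j : ℕ) then 1 / 2
    else if (j : ℕ) + 1 = (i : ℕ) then -(1 / 2)
    else if (i : ℕ) = 0 ∧ (j : ℕ) = 0 then -(1 / 2)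
    else if (i : ℕ) = M ∧ (j : ℕ) = M then 1 / 2
    else 0

noncomputable def sbpD (M : ℕ) (p : ℕ → ℝ) : Matrix (Fin (M + 1)) (Fin (M + 1)) ℝ :=
  (sbpW M p)⁻¹ * sbpQ M

noncomputable def sbpB (M : ℕ) : Matrix (Fin (M + 1)) (Fin (M + 1)) ℝ :=
  Matrix.diagonal fun j => if (j : ℕ) = 0 then -1 else if (j : ℕ) = M then 1 else 0

noncomputable def sbpP (M : ℕ) (p : ℕ → ℝ) : Matrix (Fin (M + 1)) (Fin (M + 1)) ℝ :=
  Matrix.diagonal fun j => p (j : ℕ)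

noncomputable def sbpFw (M : ℕ) (p : ℕ → ℝ) : Matrix (Fin (M + 1)) (Fin (M + 1)) ℝ :=
  (1 / 2 : ℝ) • (sbpP M p * sbpD M p + sbpD M p * sbpP M p) -
    (1 / 2 : ℝ) • ((sbpW M p)⁻¹ * sbpB M * sbpP M p)

noncomputable def sbpWhalf (M : ℕ) (p : ℕ → ℝ) : Matrix (Fin (M + 1)) (Fin (M + 1)) ℝ :=
  Matrix.diagonal fun j => Real.sqrt (sbpWeight M p (j : ℕ))

noncomputable def sbpWhalfInv (M : ℕ) (p : ℕ → ℝ) : Matrix (Fin (M + 1)) (Fin (M + 1)) ℝ :=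
  Matrix.diagonal fun j => (Real.sqrt (sbpWeight M p (j : ℕ)))⁻¹

noncomputable def sbpFh (M : ℕ) (p : ℕ → ℝ) : Matrix (Fin (M + 1)) (Fin (M + 1)) ℝ :=
  sbpWhalf M p * sbpFw M p * sbpWhalfInv M p

/-- The geometric grid `p_j = exp(−h(M−j))`. -/
noncomputable def geoGrid (M : ℕ) (h : ℝ) : ℕ → ℝ :=
  fun j => Real.exp (-(h * ((M : ℝ) - (j : ℝ))))

/-- The explicit off-diagonal entries of `F_h` on the geometric grid. -/
noncomputable def geoF (M : ℕ) (h : ℝ) (j : ℕ) : ℝ :=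
  (if j = 0 then Real.sqrt (1 + Real.exp (-h))
    else if j = M - 1 then Real.sqrt (1 + Real.exp h)
    else 1) / (4 * Real.sinh (h / 2))

/-!
For any strictly increasing grid the weights are positive, so `W⁻¹` is the diagonal of the
reciprocal weights and `(F_w)_{ij} = ((p_i + p_j) Q_{ij} - B_{ij} p_j) / (2 w_i)`. On the diagonal
`2 Q_{ii} = B_{ii}` makes this vanish; off the diagonal `B` vanishes, `Q` is tridiagonal, and the
conjugation by `W^{1/2}` turns the entry into `(p_i + p_j) Q_{ij} / (2 √(w_i w_j))`. On the
geometric grid `p_{j+1} = e^h p_j`, so every weight is a multiple of `p_j`, and with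
`x = e^{h/2}`, `sinh (h/2) = (x - x⁻¹)/2`, the three formulas for `f_j` become rational
identities in `x`.
-/

open Real

section GeneralGrid

variable {M : ℕ} {p : ℕ → ℝ}

lemma sbpWeight_pos (hp : StrictMono p) (j : ℕ) : 0 < sbpWeight M p j := by
  unfold sbpWeight
  split_ifs
  · linarith [hp zero_lt_one]
  · linarith [hp (show M - 1 < M by omega)]
  · linarith [hp (show j - 1 < j + 1 by omega)]

lemma sbpW_inv (hp : StrictMono p) :
    (sbpW M p)⁻¹ = diagonal fun j : Fin (M + 1) => (sbpWeight M p j)⁻¹ := by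
  refine inv_eq_right_inv ?_
  rw [sbpW, diagonal_mul_diagonal, ← diagonal_one]
  exact congrArg diagonal (funext fun j => mul_inv_cancel₀ (sbpWeight_pos hp j).ne')

lemma sbpFw_apply (hp : StrictMono p) (i j : Fin (M + 1)) :
    sbpFw M p i j =
      ((p i + p j) * sbpQ M i j - sbpB M i j * p j) / (2 * sbpWeight M p i) := by
  simp only [sbpFw, sbpD, sbpP, sbpW_inv hp, Matrix.sub_apply, Matrix.smul_apply,
    Matrix.add_apply, diagonal_mul, mul_diagonal, smul_eq_mul]
  field_simp

lemma sbpFh_apply (i j : Fin (M + 1)) :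
    sbpFh M p i j = √(sbpWeight M p i) * sbpFw M p i j * (√(sbpWeight M p j))⁻¹ := by
  simp only [sbpFh, sbpWhalf, sbpWhalfInv, diagonal_mul, mul_diagonal]

lemma sbpQ_apply_of_two_le_dist {i j : Fin (M + 1)}
    (hij : (i : ℕ) + 2 ≤ j ∨ (j : ℕ) + 2 ≤ i) : sbpQ M i j = 0 := by
  simp only [sbpQ, of_apply]
  split_ifs <;> first | rfl | omega

lemma sbpQ_apply_of_succ_eq {i j : Fin (M + 1)} (hij : (i : ℕ) + 1 = j) :
    sbpQ M i j = 1 / 2 := by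
  simp only [sbpQ, of_apply, if_pos hij]

lemma sbpQ_apply_of_eq_succ {i j : Fin (M + 1)} (hij : (j : ℕ) + 1 = i) :
    sbpQ M i j = -(1 / 2) := by
  simp only [sbpQ, of_apply, if_neg (show (i : ℕ) + 1 ≠ j by omega), if_pos hij]

lemma two_mul_sbpQ_apply_self (i : Fin (M + 1)) : 2 * sbpQ M i i = sbpB M i i := by
  simp only [sbpQ, sbpB, of_apply, diagonal_apply_eq]
  split_ifs <;> first | omega | norm_num

lemma sbpFh_apply_self (hp : StrictMono p) (i : Fin (M + 1)) : sbpFh M p i i = 0 := by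
  rw [sbpFh_apply, sbpFw_apply hp, ← two_mul_sbpQ_apply_self]
  ring

lemma sbpFh_apply_of_ne (hp : StrictMono p) {i j : Fin (M + 1)} (hij : i ≠ j) :
    sbpFh M p i j =
      (p i + p j) * sbpQ M i j / (2 * √(sbpWeight M p i * sbpWeight M p j)) := by
  have hwi := sbpWeight_pos (M := M) hp i
  have hwj := sbpWeight_pos (M := M) hp j
  rw [sbpFh_apply, sbpFw_apply hp, sbpB, diagonal_apply_ne _ hij, zero_mul, sub_zero,
    sqrt_mul hwi.le]
  have := sqrt_pos.2 hwi
  have := sqrt_pos.2 hwj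
  field_simp
  rw [sq_sqrt hwi.le]
  ring

lemma sbpFh_apply_of_two_le_dist (hp : StrictMono p) {i j : Fin (M + 1)}
    (hij : (i : ℕ) + 2 ≤ j ∨ (j : ℕ) + 2 ≤ i) : sbpFh M p i j = 0 := by
  rw [sbpFh_apply_of_ne hp (by rintro rfl; omega), sbpQ_apply_of_two_le_dist hij]
  ring

noncomputable def sbpSuperdiag (M : ℕ) (p : ℕ → ℝ) (j : ℕ) : ℝ :=
  (p j + p (j + 1)) / (4 * √(sbpWeight M p j * sbpWeight M p (j + 1)))

lemma sbpFh_apply_of_succ_eq (hp : StrictMono p) {i j : Fin (M + 1)} (hij : (i : ℕ) + 1 = j) :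
    sbpFh M p i j = sbpSuperdiag M p i := by
  rw [sbpFh_apply_of_ne hp (by rintro rfl; omega), sbpQ_apply_of_succ_eq hij, sbpSuperdiag, hij]
  ring

lemma sbpFh_apply_of_eq_succ (hp : StrictMono p) {i j : Fin (M + 1)} (hij : (j : ℕ) + 1 = i) :
    sbpFh M p i j = -sbpSuperdiag M p j := by
  rw [sbpFh_apply_of_ne hp (by rintro rfl; omega), sbpQ_apply_of_eq_succ hij, sbpSuperdiag, ← hij,
    add_comm (p _), mul_comm (sbpWeight M p _)]
  ring

end GeneralGrid

lemma div_four_sqrt_eq_div_four {u v N s : ℝ} (hu : 0 ≤ u) (hv : 0 < v) (hN : 0 ≤ N)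
    (hs : 0 < s) (huv : u ^ 2 * s ^ 2 = N ^ 2 * v) : u / (4 * √v) = N / (4 * s) := by
  rw [← sq_eq_sq₀ (by positivity) (by positivity), div_pow, div_pow, mul_pow, mul_pow,
    sq_sqrt hv.le, div_eq_div_iff (by positivity) (by positivity)]
  linear_combination 16 * huv

section GeometricGrid

variable {M : ℕ} {h : ℝ}

lemma geoGrid_pos (j : ℕ) : 0 < geoGrid M h j := exp_pos _

lemma geoGrid_succ (j : ℕ) : geoGrid M h (j + 1) = exp h * geoGrid M h j := by
  rw [geoGrid, geoGrid, ← exp_add]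
  push_cast
  ring_nf

lemma geoGrid_strictMono (hh : 0 < h) : StrictMono (geoGrid M h) :=
  strictMono_nat_of_lt_succ fun j => by
    rw [geoGrid_succ]
    exact lt_mul_of_one_lt_left (geoGrid_pos j) (one_lt_exp_iff.2 hh)

lemma sbpWeight_geoGrid_zero : sbpWeight M (geoGrid M h) 0 = (exp h - 1) * geoGrid M h 0 / 2 := by
  rw [sbpWeight, if_pos rfl, geoGrid_succ]
  ring

lemma sbpWeight_geoGrid_of_ne {j : ℕ} (hj0 : j ≠ 0) (hjM : j ≠ M) :
    sbpWeight M (geoGrid M h) j = (exp h - (exp h)⁻¹) * geoGrid M h j / 2 := by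
  obtain ⟨k, rfl⟩ := Nat.exists_eq_succ_of_ne_zero hj0
  rw [sbpWeight, if_neg hj0, if_neg hjM, Nat.succ_sub_one, geoGrid_succ, geoGrid_succ]
  field_simp

lemma sbpWeight_geoGrid_self (hM : M ≠ 0) :
    sbpWeight M (geoGrid M h) M = (exp h - 1) * geoGrid M h (M - 1) / 2 := by
  obtain ⟨k, rfl⟩ := Nat.exists_eq_succ_of_ne_zero hM
  rw [sbpWeight, if_neg hM, if_pos rfl, Nat.succ_sub_one, geoGrid_succ]
  ring

lemma sbpSuperdiag_geoGrid (hM : 2 ≤ M) (hh : 0 < h) {j : ℕ} (hj : j < M) :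
    sbpSuperdiag M (geoGrid M h) j = geoF M h j := by
  have hp : StrictMono (geoGrid M h) := geoGrid_strictMono hh
  refine div_four_sqrt_eq_div_four (add_pos (geoGrid_pos j) (geoGrid_pos _)).le
    (mul_pos (sbpWeight_pos hp j) (sbpWeight_pos hp _)) (by split_ifs <;> positivity)
    (sinh_pos_iff.2 (half_pos hh)) ?_
  set x := exp (h / 2) with hx
  have hx1 : 1 < x := one_lt_exp_iff.2 (half_pos hh)
  have hexp : exp h = x ^ 2 := by rw [hx, ← exp_nat_mul]; ring_nf
  have hsinh : sinh (h / 2) = (x - x⁻¹) / 2 := by rw [sinh_eq, exp_neg]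
  rw [geoGrid_succ, hsinh]
  split_ifs with hj0 hjM
  · rw [sbpWeight_geoGrid_of_ne (j := j + 1) (by omega) (by omega), geoGrid_succ, hj0,
      sbpWeight_geoGrid_zero, sq_sqrt (by positivity), exp_neg, hexp]
    field_simp
    ring
  · rw [sbpWeight_geoGrid_of_ne hj0 (by omega), show j + 1 = M by omega,
      sbpWeight_geoGrid_self (by omega), ← hjM, sq_sqrt (by positivity), hexp]
    field_simp
    ring
  · rw [sbpWeight_geoGrid_of_ne hj0 (by omega), sbpWeight_geoGrid_of_ne (by omega) (by omega),
      geoGrid_succ, hexp]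
    field_simp
    ring

end GeometricGrid

/-- On the geometric grid `p_j = exp(−h(M−j))` with `h > 0` and `M ≥ 3`,
the matrix `F_h` is tridiagonal with zero diagonal, and its superdiagonal entries
`f_j = (F_h)_{j,j+1} = −(F_h)_{j+1,j}` are given by the explicit formula `geoF`. -/
theorem sbpFh_geometric_grid (M : ℕ) (hM : 3 ≤ M) (h : ℝ) (hh : 0 < h) :
    (∀ i j : Fin (M + 1), ((i : ℕ) + 2 ≤ (j : ℕ) ∨ (j : ℕ) + 2 ≤ (i : ℕ)) →
      sbpFh M (geoGrid M h) i j = 0) ∧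
    (∀ j : Fin (M + 1), sbpFh M (geoGrid M h) j j = 0) ∧
    (∀ j : ℕ, ∀ hj : j < M,
      sbpFh M (geoGrid M h) ⟨j, Nat.lt_succ_of_lt hj⟩ ⟨j + 1, Nat.succ_lt_succ hj⟩ =
        geoF M h j ∧
      sbpFh M (geoGrid M h) ⟨j + 1, Nat.succ_lt_succ hj⟩ ⟨j, Nat.lt_succ_of_lt hj⟩ =
        -geoF M h j) := by
  have hp : StrictMono (geoGrid M h) := geoGrid_strictMono hh
  refine ⟨fun i j hij => sbpFh_apply_of_two_le_dist hp hij, sbpFh_apply_self hp,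
    fun j hj => ?_⟩
  have hf : sbpSuperdiag M (geoGrid M h) j = geoF M h j := sbpSuperdiag_geoGrid (by omega) hh hj
  rw [sbpFh_apply_of_succ_eq hp rfl, sbpFh_apply_of_eq_succ hp rfl]
  exact ⟨hf, congrArg Neg.neg hf⟩
end

section
/- Discrete pathwise recovery: Let F be a d_A × d_A complex matrix and r, l ∈ ℂ^{d_A} satisfy l† F^k r = 1 for every integer k ≥ 0. Let A, K, B_1, …, B_J be N × N complex matrices, V_0 := I_A ⊗ A + (F − I_A) ⊗ K, V_j := I_A ⊗ B_j. Then for every n ≥ 1 and arbitrary complex scalars τ_1, …, τ_n and c_{m,j} (1 ≤ m ≤ n, 1 ≤ j ≤ J), the time-ordered products satisfy (l† ⊗ I_N) · ∏_{m=n}^{1} ( I_{A} ⊗ I_N + τ_m V_0 + Σ_{j=1}^{J} c_{m,j} V_j ) · (r ⊗ I_N) = ∏_{m=n}^{1} ( I_N + τ_m A + Σ_{j=1}^{J} c_{m,j} B_j ), where ∏_{m=n}^{1} denotes the product with the factor m = n leftmost. -/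
/-! Write `P := F - 1`, so that each dilated step is `1 ⊗ S_m + P ⊗ τ_m K` with `S_m` the
original step, and the moment condition becomes `l† P^k r = δ_{k0}`. Pulling the dilated steps
through `l† ⊗ 1` one at a time, the `P ⊗ T` part turns `l` into `P† l`, which annihilates every
`P^k r`; so only the `1 ⊗ S_m` parts survive, and they multiply to the original product. -/

open Matrix Kronecker

noncomputable def dilV {dA N J : ℕ} (F : Matrix (Fin dA) (Fin dA) ℂ)
    (A K : Matrix (Fin N) (Fin N) ℂ) (B : Fin J → Matrix (Fin N) (Fin N) ℂ) :
    Fin (J + 1) → Matrix (Fin dA × Fin N) (Fin dA × Fin N) ℂ :=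
  Fin.cases ((1 : Matrix (Fin dA) (Fin dA) ℂ) ⊗ₖ A +
      (F - (1 : Matrix (Fin dA) (Fin dA) ℂ)) ⊗ₖ K)
    (fun j => (1 : Matrix (Fin dA) (Fin dA) ℂ) ⊗ₖ B j)

noncomputable def readL {dA N : ℕ} (l : Fin dA → ℂ) :
    Matrix (Fin N) (Fin dA × Fin N) ℂ :=
  Matrix.of fun i p => star (l p.1) * (if p.2 = i then 1 else 0)

noncomputable def embedR {dA N : ℕ} (r : Fin dA → ℂ) :
    Matrix (Fin dA × Fin N) (Fin N) ℂ :=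
  Matrix.of fun p i => r p.1 * (if p.2 = i then 1 else 0)

/-- One time step of the dilated discrete evolution:
`I + τ_m V_0 + Σ_j c_{m,j} V_j`. -/
noncomputable def dilStep {dA N J : ℕ} (F : Matrix (Fin dA) (Fin dA) ℂ)
    (A K : Matrix (Fin N) (Fin N) ℂ) (B : Fin J → Matrix (Fin N) (Fin N) ℂ)
    {n : ℕ} (τ : Fin n → ℂ) (c : Fin n → Fin J → ℂ) (m : Fin n) :
    Matrix (Fin dA × Fin N) (Fin dA × Fin N) ℂ :=
  1 + τ m • dilV F A K B 0 + ∑ j : Fin J, c m j • dilV F A K B j.succ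

/-- One time step of the original discrete evolution:
`I + τ_m A + Σ_j c_{m,j} B_j`. -/
noncomputable def sdeStep {N J : ℕ} (A : Matrix (Fin N) (Fin N) ℂ)
    (B : Fin J → Matrix (Fin N) (Fin N) ℂ) {n : ℕ}
    (τ : Fin n → ℂ) (c : Fin n → Fin J → ℂ) (m : Fin n) :
    Matrix (Fin N) (Fin N) ℂ :=
  1 + τ m • A + ∑ j : Fin J, c m j • B j

lemma readL_mul_kronecker {dA N : ℕ} (u : Fin dA → ℂ) (X : Matrix (Fin dA) (Fin dA) ℂ)
    (M : Matrix (Fin N) (Fin N) ℂ) :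
    readL (N := N) u * (X ⊗ₖ M) = M * readL (N := N) (Xᴴ *ᵥ u) := by
  refine Matrix.ext fun i ⟨a, b⟩ => ?_
  simp only [Matrix.mul_apply, readL, of_apply, kronecker_apply, Fintype.sum_prod_type, mulVec,
    dotProduct, conjTranspose_apply, star_sum, star_mul', star_star, mul_ite, ite_mul, mul_one,
    mul_zero, zero_mul, Finset.sum_ite_eq', Finset.sum_ite_eq, Finset.mem_univ, if_true,
    Finset.mul_sum]
  exact Finset.sum_congr rfl fun _ _ => by ring

lemma readL_mul_embedR {dA N : ℕ} (u v : Fin dA → ℂ) :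
    readL (N := N) u * embedR (N := N) v = (star u ⬝ᵥ v) • (1 : Matrix (Fin N) (Fin N) ℂ) := by
  refine Matrix.ext fun i i' => ?_
  simp only [Matrix.mul_apply, readL, embedR, of_apply, Fintype.sum_prod_type, dotProduct,
    Matrix.smul_apply, one_apply, Pi.star_apply, smul_eq_mul, mul_ite, ite_mul, mul_one,
    mul_zero, zero_mul, Finset.sum_ite_eq', Finset.mem_univ, if_true]
  split_ifs <;> simp_all [eq_comm]

lemma dotProduct_sub_one_pow_mul_pow_mulVec {n R : Type*} [Fintype n] [DecidableEq n] [Ring R]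
    {F : Matrix n n R} {w r : n → R} (hmm : ∀ k : ℕ, w ⬝ᵥ (F ^ k *ᵥ r) = 1) (k j : ℕ) :
    w ⬝ᵥ (((F - 1) ^ k * F ^ j) *ᵥ r) = if k = 0 then 1 else 0 := by
  induction k generalizing j with
  | zero => simpa using hmm j
  | succ k ih =>
    rw [pow_succ, mul_sub, mul_one, sub_mul, mul_assoc, ← pow_succ', sub_mulVec, dotProduct_sub,
      ih, ih, sub_self, if_neg k.succ_ne_zero]

lemma dilStep_eq_kronecker {dA N J : ℕ} (F : Matrix (Fin dA) (Fin dA) ℂ)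
    (A K : Matrix (Fin N) (Fin N) ℂ) (B : Fin J → Matrix (Fin N) (Fin N) ℂ)
    {n : ℕ} (τ : Fin n → ℂ) (c : Fin n → Fin J → ℂ) (m : Fin n) :
    dilStep F A K B τ c m = 1 ⊗ₖ sdeStep A B τ c m + (F - 1) ⊗ₖ (τ m • K) := by
  have hsum : (1 : Matrix (Fin dA) (Fin dA) ℂ) ⊗ₖ ∑ j, c m j • B j
      = ∑ j, c m j • (1 ⊗ₖ B j) :=
    (map_sum (kroneckerBilinear (R := ℂ) (1 : Matrix (Fin dA) (Fin dA) ℂ)) _ _).trans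
      (Finset.sum_congr rfl fun j _ => kronecker_smul (c m j) 1 (B j))
  simp only [dilStep, sdeStep, dilV, Fin.cases_zero, Fin.cases_succ, kronecker_add,
    kronecker_smul, one_kronecker_one, hsum, smul_add]
  abel

lemma readL_mul_prod_kronecker_mul_embedR {dA N : ℕ} (P : Matrix (Fin dA) (Fin dA) ℂ)
    (r : Fin dA → ℂ) (L : List (Matrix (Fin N) (Fin N) ℂ × Matrix (Fin N) (Fin N) ℂ))
    (u : Fin dA → ℂ) (a : ℂ) (hu : ∀ k, star u ⬝ᵥ (P ^ k *ᵥ r) = if k = 0 then a else 0) :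
    readL (N := N) u * (L.map fun p => 1 ⊗ₖ p.1 + P ⊗ₖ p.2).prod * embedR (N := N) r
      = a • (L.map Prod.fst).prod := by
  induction L generalizing u a with
  | nil =>
    have hr : star u ⬝ᵥ r = a := by simpa using hu 0
    simp [readL_mul_embedR, hr]
  | cons p L ih =>
    set tail := (L.map fun p => 1 ⊗ₖ p.1 + P ⊗ₖ p.2).prod
    have hstep : readL (N := N) u * ((1 ⊗ₖ p.1 + P ⊗ₖ p.2) * tail) * embedR (N := N) r
        = p.1 * (readL (N := N) u * tail * embedR (N := N) r)
          + p.2 * (readL (N := N) (Pᴴ *ᵥ u) * tail * embedR (N := N) r) := by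
      simp only [Matrix.mul_add, Matrix.add_mul, ← Matrix.mul_assoc, readL_mul_kronecker,
        conjTranspose_one, one_mulVec]
    have hshift (k : ℕ) : star (Pᴴ *ᵥ u) ⬝ᵥ (P ^ k *ᵥ r) = if k = 0 then 0 else 0 := by
      rw [star_mulVec, conjTranspose_conjTranspose, ← dotProduct_mulVec, mulVec_mulVec,
        ← pow_succ', hu, if_neg k.succ_ne_zero, ite_self]
    rw [List.map_cons, List.prod_cons, hstep, ih u a hu, ih _ 0 hshift, zero_smul, mul_zero,
      add_zero, mul_smul_comm, List.map_cons, List.prod_cons]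

theorem discrete_pathwise_recovery_general (dA N J : ℕ)
    (F : Matrix (Fin dA) (Fin dA) ℂ) (r l : Fin dA → ℂ)
    (hmm : ∀ k : ℕ, star l ⬝ᵥ (F ^ k *ᵥ r) = 1)
    (A K : Matrix (Fin N) (Fin N) ℂ) (B : Fin J → Matrix (Fin N) (Fin N) ℂ)
    (n : ℕ) (τ : Fin n → ℂ) (c : Fin n → Fin J → ℂ) :
    readL (N := N) l * (List.ofFn fun i => dilStep F A K B τ c (Fin.rev i)).prod * embedR (N := N) r =
      (List.ofFn fun i => sdeStep A B τ c (Fin.rev i)).prod := by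
  have hmoment (k : ℕ) : star l ⬝ᵥ ((F - 1) ^ k *ᵥ r) = if k = 0 then 1 else 0 := by
    simpa using dotProduct_sub_one_pow_mul_pow_mulVec hmm k 0
  simpa [List.map_ofFn, Function.comp_def, dilStep_eq_kronecker] using
    readL_mul_prod_kronecker_mul_embedR (F - 1) r
      (List.ofFn fun i => (sdeStep A B τ c i.rev, τ i.rev • K)) l 1 hmoment

/-- **Discrete pathwise recovery.** For a moment-matching triple `(F, r, l)`
and arbitrary presampled scalars `τ_m`, `c_{m,j}`, the projected time-ordered product of
dilated steps (factor `m = n` leftmost) equals the time-ordered product of original steps. -/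
theorem discrete_pathwise_recovery (dA N J : ℕ) (hdA : 1 ≤ dA) (hN : 1 ≤ N)
    (F : Matrix (Fin dA) (Fin dA) ℂ) (r l : Fin dA → ℂ)
    (hmm : ∀ k : ℕ, star l ⬝ᵥ (F ^ k *ᵥ r) = 1)
    (A K : Matrix (Fin N) (Fin N) ℂ) (B : Fin J → Matrix (Fin N) (Fin N) ℂ)
    (n : ℕ) (hn : 1 ≤ n) (τ : Fin n → ℂ) (c : Fin n → Fin J → ℂ) :
    readL (N := N) l * (List.ofFn fun i => dilStep F A K B τ c (Fin.rev i)).prod * embedR (N := N) r =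
      (List.ofFn fun i => sdeStep A B τ c (Fin.rev i)).prod :=
  discrete_pathwise_recovery_general dA N J F r l hmm A K B n τ c
end
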